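/- For every ε > 0 there exists m_0 such that for all m ≥ m_0: the average 1-block-sensitivity of f_Surj satisfies bs̄_1(f_Surj) ≥ M, and the average 0-block-sensitivity satisfies bs̄_0(f_Surj) ≥ (1/(e−1) − ε)·(N − M). (Here bs̄_b(f) := E[ bs_X(f) ] over X drawn uniformly from {X ∈ [M]^N : f(X) = b}.) -/

import Mathlib

namespace GLN

noncomputable section

open Finset

/-- `M = 2^m`. -/
def MM (m : ℕ) : ℕ := 2 ^ m

/-- `N = ⌈M · m · ln 2⌉`. -/
def NN (m : ℕ) : ℕ := ⌈(MM m : ℝ) * m * Real.log 2⌉₊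

/-- Strings `X ∈ [M]^N`. -/
abbrev Str (m : ℕ) := Fin (NN m) → Fin (MM m)

/-- The uniform probability mass function on `[M]^N`. -/
def umass (m : ℕ) (_X : Str m) : ℝ := 1 / (MM m : ℝ) ^ NN m

/-- The image `Im(X) ⊆ [M]` of a string, as a finset. -/
def img {m : ℕ} (X : Str m) : Finset (Fin (MM m)) := Finset.image X Finset.univ

/-- Transition kernel of `D_y(X)`: each coordinate with `x_i = y` is replaced by a uniform
independent sample from `[M] \ {y}`; other coordinates are unchanged. -/
def kerDy (m : ℕ) (y : Fin (MM m)) (X Z : Str m) : ℝ :=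
  ∏ i, if X i = y then (if Z i = y then 0 else 1 / ((MM m : ℝ) - 1))
       else (if Z i = X i then 1 else 0)

/-- Transition kernel of `D(X)`: choose `y` uniformly in `[M]`, then apply `D_y`. -/
def kerD (m : ℕ) (X Z : Str m) : ℝ := (1 / (MM m : ℝ)) * ∑ y, kerDy m y X Z

/-- The probability mass function of the distribution `D = D(U)`. -/
def dmass (m : ℕ) (Z : Str m) : ℝ := ∑ X, umass m X * kerD m X Z

/-- Transition kernel of `D_y^inv(Z)`: each coordinate is independently replaced by `y`
with probability `1/M` and left unchanged otherwise. -/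
def kerDinvy (m : ℕ) (y : Fin (MM m)) (Z W : Str m) : ℝ :=
  ∏ i, ((1 / (MM m : ℝ)) * (if W i = y then 1 else 0)
        + (1 - 1 / (MM m : ℝ)) * (if W i = Z i then 1 else 0))

/-- Transition kernel of `D^inv(Z)`: choose `y` uniformly in `[M] \ Im(Z)`,
then apply `D_y^inv`. -/
def kerDinv (m : ℕ) (Z W : Str m) : ℝ :=
  (1 / (((img Z)ᶜ.card : ℝ))) * ∑ y ∈ (img Z)ᶜ, kerDinvy m y Z W

/-- Probability of an event under a mass function. -/
def pr {m : ℕ} (μ : Str m → ℝ) (E : Set (Str m)) : ℝ := ∑ X, E.indicator μ X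

/-- Expectation of a real function under a mass function. -/
def ev {m : ℕ} (μ : Str m → ℝ) (g : Str m → ℝ) : ℝ := ∑ X, μ X * g X

/-- The surjectivity function `f_Surj`. -/
def fSurjB (m : ℕ) (X : Str m) : Bool := decide (img X = Finset.univ)

/-- The `q.2`-th bit of the binary encoding of coordinate `x_{q.1}` of `X`;
this realizes `X` as a string of `n = N·m` bits. -/
def bit {m : ℕ} (X : Str m) (q : Fin (NN m) × Fin m) : Bool :=
  Nat.testBit (X q.1).val q.2.val


/-- The block-sensitivity of `f` at `X`: the largest `t` for which there exist pairwise
disjoint blocks `B_1,…,B_t ⊆ [N]` and strings `X^{(1)},…,X^{(t)}`, with `X^{(j)}` agreeing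
with `X` outside `B_j`, such that `f(X^{(j)}) ≠ f(X)` for every `j`. -/
def bs {m : ℕ} (f : Str m → Bool) (X : Str m) : ℕ :=
  sSup {t : ℕ | ∃ B : Fin t → Finset (Fin (NN m)),
    (∀ j j', j ≠ j' → Disjoint (B j) (B j')) ∧
    ∃ X' : Fin t → Str m, ∀ j, (∀ i, i ∉ B j → X' j i = X i) ∧ f (X' j) ≠ f X}

/-- The average `b`-block-sensitivity of `f`: the expectation of `bs_X(f)` over `X`
drawn uniformly from `{X : f(X) = b}`. -/
def avgBs (m : ℕ) (f : Str m → Bool) (b : Bool) : ℝ :=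
  (∑ X ∈ Finset.univ.filter (fun X : Str m => f X = b), (bs f X : ℝ)) /
    ((Finset.univ.filter fun X : Str m => f X = b).card : ℝ)


/-!
A surjective string is sensitive on the `M` disjoint blocks `{i | x_i = y}`: overwriting one of
them removes `y` from the image. A string missing `k ≥ 1` values keeps its image as long as one
position per value is kept; the other `N - |Im X|` positions contain `⌊(N - |Im X|)/k⌋` disjoint
blocks of size `k`, and writing the missing values into any one of them makes the string
surjective. Hence `bs_X ≥ (N - M)/k`, and it remains to show `E[1/k | k ≥ 1] ≥ 7/12 > 1/(e - 1)`.
Since `N ≈ M ln M`, `k` is roughly Poisson(1): at most `M (M - 1)^N / j!` strings miss exactly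
`j` values, while by the Bonferroni inequality for surjections onto `M - 1` values at least
`(3/10) M (M - 1)^N` strings miss exactly one.
-/

section BlockSensitivity

variable {m : ℕ}

theorem fSurjB_eq_true_iff {X : Str m} : fSurjB m X = true ↔ img X = univ := by
  simp [fSurjB]

theorem fSurjB_eq_false_iff {X : Str m} : fSurjB m X = false ↔ #(img X)ᶜ ≠ 0 := by
  simp [fSurjB, card_eq_zero]

theorem le_NN_of_sensitive_blocks {f : Str m → Bool} {X : Str m} {t : ℕ}
    (B : Fin t → Finset (Fin (NN m))) (hB : ∀ j j', j ≠ j' → Disjoint (B j) (B j'))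
    (X' : Fin t → Str m) (hX' : ∀ j, (∀ i, i ∉ B j → X' j i = X i) ∧ f (X' j) ≠ f X) :
    t ≤ NN m := by
  have hne : ∀ j ∈ (univ : Finset (Fin t)), (B j).Nonempty := fun j _ ↦ by
    by_contra h
    refine (hX' j).2 (congrArg f (funext fun i ↦ (hX' j).1 i ?_))
    simp_all [not_nonempty_iff_eq_empty]
  calc t = #(univ : Finset (Fin t)) := (card_fin t).symm
    _ ≤ #(univ.biUnion B) := card_le_card_biUnion (fun j _ j' _ h ↦ hB j j' h) hne
    _ ≤ NN m := (card_le_univ _).trans (Fintype.card_fin _).le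

theorem le_bs {f : Str m → Bool} {X : Str m} {t : ℕ}
    (B : Fin t → Finset (Fin (NN m))) (hB : ∀ j j', j ≠ j' → Disjoint (B j) (B j'))
    (X' : Fin t → Str m) (hX' : ∀ j, (∀ i, i ∉ B j → X' j i = X i) ∧ f (X' j) ≠ f X) :
    t ≤ bs f X :=
  le_csSup ⟨NN m, fun _ ⟨B, hB, X', hX'⟩ ↦ le_NN_of_sensitive_blocks B hB X' hX'⟩
    ⟨B, hB, X', hX'⟩

theorem MM_le_bs_of_surjective (hM : 1 < MM m) {X : Str m} (hX : img X = univ) :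
    MM m ≤ bs (fSurjB m) X := by
  choose other hother using Fintype.exists_ne_of_one_lt_card (α := Fin (MM m)) (by simpa using hM)
  refine le_bs (fun y ↦ {i | X i = y}) (fun y y' hyy' ↦ ?_)
    (fun y i ↦ if X i = y then other y else X i) fun y ↦ ⟨fun i hi ↦ ?_, ?_⟩
  · exact disjoint_filter.2 fun i _ hy hy' ↦ hyy' (hy.symm.trans hy')
  · simp_all
  · rw [fSurjB_eq_true_iff.2 hX, ne_eq, Bool.not_eq_true, fSurjB, decide_eq_false_iff_not]
    intro h
    obtain ⟨i, -, hi⟩ := mem_image.1 (h ▸ mem_univ y : y ∈ img _)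
    by_cases hXi : X i = y <;> simp_all

theorem le_bs_of_not_surjective {X : Str m} (hX : img X ≠ univ) :
    (NN m - #(img X)) / #(img X)ᶜ ≤ bs (fSurjB m) X := by
  set t := (NN m - #(img X)) / #(img X)ᶜ
  -- `R` holds one position per value of `X`; block `j` is the row `e (j, ·)` of an injection
  -- `e : Fin t × (img X)ᶜ ↪ Rᶜ`, and is overwritten with the missing values
  obtain ⟨R, -, hRinj, hRimg⟩ := exists_subset_injOn_image_eq_of_surjOn
    (Set.univ : Set (Fin (NN m))) (img X) fun y hy ↦ by simpa [img] using hy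
  have hcard : Fintype.card (Fin t × ↥(img X)ᶜ) ≤ Fintype.card {i // i ∉ R} := by
    have hR : #R = #(img X) := by rw [← hRimg, card_image_of_injOn hRinj]
    rw [Fintype.card_prod, Fintype.card_fin, Fintype.card_coe, Fintype.card_subtype_compl,
      Fintype.card_coe, hR, Fintype.card_fin]
    exact Nat.div_mul_le_self _ _
  obtain ⟨e⟩ := Function.Embedding.nonempty_of_card_le hcard
  have he : ∀ j, Function.Injective fun b ↦ (e (j, b) : Fin (NN m)) :=
    fun j b b' h ↦ (Prod.mk.inj (e.injective (Subtype.ext h))).2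
  refine le_bs (fun j ↦ univ.image fun b ↦ (e (j, b) : Fin (NN m))) (fun j j' hjj' ↦ ?_)
    (fun j ↦ Function.extend (fun b ↦ (e (j, b) : Fin (NN m)))
      (fun b : ↥(img X)ᶜ ↦ (b : Fin (MM m))) X)
    fun j ↦ ⟨fun i hi ↦ Function.extend_apply' _ _ _ fun ⟨b, hb⟩ ↦ hi (by simp [← hb]),
      ?_⟩
  · simp only [disjoint_left, mem_image, mem_univ, true_and]
    rintro _ ⟨b, rfl⟩ ⟨b', hb'⟩
    exact hjj' (Prod.mk.inj (e.injective (Subtype.ext hb'))).1.symm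
  · have hX' : fSurjB m X = false := by simpa [fSurjB] using hX
    rw [hX', ne_eq, Bool.not_eq_false, fSurjB_eq_true_iff, eq_univ_iff_forall]
    intro y
    by_cases hy : y ∈ img X
    · obtain ⟨r, hr, rfl⟩ := mem_image.1 (hRimg ▸ hy)
      refine mem_image.2 ⟨r, mem_univ _, Function.extend_apply' _ _ _ ?_⟩
      rintro ⟨b, hb⟩
      exact (e (j, b)).2 (hb ▸ hr)
    · exact mem_image.2
        ⟨_, mem_univ _, (he j).extend_apply _ _ (⟨y, mem_compl.2 hy⟩ : ↥(img X)ᶜ)⟩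

theorem sub_div_le_bs_of_not_surjective {X : Str m} (hX : img X ≠ univ) :
    ((NN m : ℝ) - MM m) / #(img X)ᶜ ≤ bs (fSurjB m) X := by
  have hk : 0 < #(img X)ᶜ := Nat.pos_of_ne_zero (by simpa [card_eq_zero] using hX)
  have hsk : #(img X) + #(img X)ᶜ = MM m := by rw [card_add_card_compl, Fintype.card_fin]
  have hdiv := Nat.div_add_mod (NN m - #(img X)) #(img X)ᶜ
  have hmod := Nat.mod_lt (NN m - #(img X)) hk
  have hN : NN m ≤ MM m + #(img X)ᶜ * ((NN m - #(img X)) / #(img X)ᶜ) := by omega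
  rw [div_le_iff₀ (by exact_mod_cast hk), sub_le_iff_le_add']
  calc (NN m : ℝ) ≤ MM m + #(img X)ᶜ * ((NN m - #(img X)) / #(img X)ᶜ : ℕ) := by
        exact_mod_cast hN
    _ ≤ MM m + bs (fSurjB m) X * #(img X)ᶜ := by
      rw [mul_comm]; gcongr; exact_mod_cast le_bs_of_not_surjective hX

end BlockSensitivity

section Counting

variable {ι α : Type*} [Fintype ι] [DecidableEq ι] [DecidableEq α]

theorem alternating_sum_range_choose_le {J : ℕ} (hJ : Odd J) (r : ℕ) :
    ∑ j ∈ range (J + 1), (-1 : ℤ) ^ j * r.choose j ≤ if r = 0 then 1 else 0 := by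
  cases r with
  | zero => simp [sum_range_succ']
  | succ r =>
    rw [Int.alternating_sum_range_choose_eq_choose, hJ.neg_one_pow]
    simp

theorem sum_choose_card_sdiff_image (S : Finset α) (j : ℕ) :
    ∑ X ∈ Fintype.piFinset (fun _ : ι ↦ S), (#(S \ univ.image X)).choose j
      = (#S).choose j * (#S - j) ^ Fintype.card ι := by
  -- double count pairs `(X, T)` with `T` a `j`-subset of `S` avoided by `X`
  have hchoose : ∀ X : ι → α, (#(S \ univ.image X)).choose j
      = #{T ∈ powersetCard j S | Disjoint T (univ.image X)} := fun X ↦ by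
    rw [← card_powersetCard]
    congr 1
    ext T
    simp [mem_powersetCard, subset_sdiff, and_right_comm]
  have hfiber : ∀ T ∈ powersetCard j S,
      #{X ∈ Fintype.piFinset (fun _ : ι ↦ S) | Disjoint T (univ.image X)}
        = (#S - j) ^ Fintype.card ι := fun T hT ↦ by
    obtain ⟨hTS, hTj⟩ := mem_powersetCard.1 hT
    have : {X ∈ Fintype.piFinset (fun _ : ι ↦ S) | Disjoint T (univ.image X)}
        = Fintype.piFinset fun _ ↦ S \ T := by
      ext X
      simp only [mem_filter, Fintype.mem_piFinset, mem_sdiff, disjoint_right, mem_image,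
        mem_univ, true_and, forall_exists_index, forall_apply_eq_imp_iff]
      exact ⟨fun h i ↦ ⟨h.1 i, h.2 i⟩, fun h ↦ ⟨fun i ↦ (h i).1, fun i ↦ (h i).2⟩⟩
    rw [this, Fintype.card_piFinset, prod_const, card_univ, card_sdiff_of_subset hTS, hTj]
  simp_rw [hchoose, card_filter]
  rw [sum_comm, ← card_powersetCard j S, card_eq_sum_ones, sum_mul]
  refine sum_congr rfl fun T hT ↦ ?_
  rw [← card_filter, hfiber T hT, one_mul]

variable [Fintype α]

theorem sum_alternating_le_card_image_eq {J : ℕ} (hJ : Odd J) (S : Finset α) :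
    ∑ j ∈ range (J + 1),
        (-1 : ℤ) ^ j * (#S).choose j * ((#S - j : ℕ) : ℤ) ^ Fintype.card ι
      ≤ #{X : ι → α | univ.image X = S} := by
  have hsurj : ({X : ι → α | univ.image X = S} : Finset (ι → α))
      = {X ∈ Fintype.piFinset (fun _ : ι ↦ S) | #(S \ univ.image X) = 0} := by
    ext X
    simp only [mem_filter, mem_univ, true_and, Fintype.mem_piFinset, card_eq_zero,
      sdiff_eq_empty_iff_subset]
    refine ⟨fun h ↦ ⟨fun i ↦ h ▸ mem_image_of_mem X (mem_univ i), h.ge⟩, fun ⟨h, hS⟩ ↦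
      (image_subset_iff.2 fun i _ ↦ h i).antisymm hS⟩
  rw [hsurj, card_filter, Nat.cast_sum]
  calc ∑ j ∈ range (J + 1),
        (-1 : ℤ) ^ j * (#S).choose j * ((#S - j : ℕ) : ℤ) ^ Fintype.card ι
      = ∑ X ∈ Fintype.piFinset (fun _ : ι ↦ S),
          ∑ j ∈ range (J + 1), (-1 : ℤ) ^ j * (#(S \ univ.image X)).choose j := by
        rw [sum_comm]
        refine sum_congr rfl fun j _ ↦ ?_
        rw [← mul_sum, mul_assoc, ← Nat.cast_sum, sum_choose_card_sdiff_image]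
        push_cast; rfl
    _ ≤ _ := sum_le_sum fun X _ ↦ by
        simpa using alternating_sum_range_choose_le hJ (#(S \ univ.image X))

theorem card_compl_image_eq_le (j : ℕ) :
    #{X : ι → α | #(univ.image X)ᶜ = j}
      ≤ (Fintype.card α).choose j * (Fintype.card α - j) ^ Fintype.card ι := by
  have h := sum_choose_card_sdiff_image (ι := ι) (univ : Finset α) j
  simp only [Fintype.piFinset_univ, ← compl_eq_univ_sdiff, card_univ] at h
  rw [← h, card_filter]
  refine sum_le_sum fun X _ ↦ ?_
  split_ifs with hX
  · simp [hX]
  · exact Nat.zero_le _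

theorem sum_card_image_eq_compl_singleton_le :
    ∑ y : α, #{X : ι → α | univ.image X = {y}ᶜ}
      ≤ #{X : ι → α | #(univ.image X)ᶜ = 1} := by
  rw [← card_biUnion]
  · refine card_le_card fun X ↦ ?_
    simp only [mem_biUnion, mem_univ, mem_filter, true_and, card_eq_one]
    exact fun ⟨y, hy⟩ ↦ ⟨y, by rw [hy, compl_compl]⟩
  · intro y _ y' _ hyy'
    refine disjoint_filter.2 fun X _ h h' ↦ hyy' ?_
    simpa using h.symm.trans h'

end Counting

section Estimates

open Real

theorem add_pow_le_pow_mul_exp {a b : ℝ} (ha : 0 < a) (hab : 0 ≤ a + b) (n : ℕ) :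
    (a + b) ^ n ≤ a ^ n * exp (b * n / a) := by
  have h : a + b ≤ a * exp (b / a) := by
    calc a + b = a * (b / a + 1) := by field_simp; ring
      _ ≤ a * exp (b / a) := by gcongr; exact add_one_le_exp _
  calc (a + b) ^ n ≤ (a * exp (b / a)) ^ n := pow_le_pow_left₀ hab h n
    _ = a ^ n * exp (b * n / a) := by rw [mul_pow, ← exp_nat_mul]; ring_nf

theorem descFactorial_mul_pow_sub_le {t n j : ℕ} (ht : 0 < t) (htn : t * log t ≤ n)
    (hj : j ≤ t) : (t.descFactorial j : ℝ) * ((t - j : ℕ) : ℝ) ^ n ≤ (t : ℝ) ^ n := by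
  have ht' : (0 : ℝ) < t := by exact_mod_cast ht
  have hsub : ((t : ℝ) - j) ^ n ≤ t ^ n * exp (-j * n / t) := by
    simpa [sub_eq_add_neg] using add_pow_le_pow_mul_exp ht' (b := -j) (by simp [hj]) n
  have hpow : (t : ℝ) ^ j ≤ exp (j * n / t) := by
    rw [← exp_log (pow_pos ht' j), log_pow, mul_div_assoc]
    gcongr
    rwa [le_div_iff₀ ht', mul_comm]
  calc (t.descFactorial j : ℝ) * ((t - j : ℕ) : ℝ) ^ n
      ≤ (t : ℝ) ^ j * ((t : ℝ) ^ n * exp (-j * n / t)) := by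
        push_cast [hj]
        exact mul_le_mul (mod_cast Nat.descFactorial_le_pow t j) hsub
          (pow_nonneg (sub_nonneg.2 (mod_cast hj)) n) (by positivity)
    _ ≤ exp (j * n / t) * ((t : ℝ) ^ n * exp (-j * n / t)) := by gcongr
    _ = (t : ℝ) ^ n := by
      rw [mul_left_comm, ← exp_add, neg_mul, neg_div, add_neg_cancel, exp_zero, mul_one]

theorem pow_mul_exp_le_descFactorial_mul_pow_sub {t n j : ℕ} (hj : j < t) {ε : ℝ}
    (hε : (n + j) / (t - j) ≤ log t + ε) :
    (t : ℝ) ^ n * exp (-(j * ε)) ≤ t.descFactorial j * ((t - j : ℕ) : ℝ) ^ n := by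
  have ht : (0 : ℝ) < t := by exact_mod_cast hj.trans_le' (Nat.zero_le j)
  have ha : (0 : ℝ) < t - j := by simp [hj]
  have hdesc : ((t : ℝ) - j) ^ j ≤ t.descFactorial j := by
    have h := Nat.cast_le (α := ℝ).2
      ((Nat.pow_le_pow_left (Nat.sub_le_sub_right t.le_succ j) j).trans
        (Nat.pow_sub_le_descFactorial t j))
    push_cast [hj.le] at h
    exact h
  have hexp : exp (j * ((n + j : ℕ) : ℝ) / (t - j)) ≤ (t : ℝ) ^ j * exp (j * ε) := by
    rw [← exp_log (pow_pos ht j), log_pow, ← exp_add]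
    apply exp_le_exp.2
    calc j * ((n + j : ℕ) : ℝ) / (t - j) = j * ((n + j) / (t - j)) := by push_cast; ring
      _ ≤ j * (log t + ε) := by gcongr
      _ = _ := by ring
  have hmain : (t : ℝ) ^ n ≤ ((t : ℝ) - j) ^ (n + j) * exp (j * ε) := by
    have hsum := add_pow_le_pow_mul_exp ha (b := j) (by simp) (n + j)
    rw [sub_add_cancel] at hsum
    refine le_of_mul_le_mul_right ?_ (pow_pos ht j)
    calc (t : ℝ) ^ n * t ^ j = t ^ (n + j) := (pow_add _ _ _).symm
      _ ≤ ((t : ℝ) - j) ^ (n + j) * ((t : ℝ) ^ j * exp (j * ε)) :=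
        hsum.trans (by gcongr)
      _ = _ := by ring
  calc (t : ℝ) ^ n * exp (-(j * ε))
      ≤ ((t : ℝ) - j) ^ (n + j) * exp (j * ε) * exp (-(j * ε)) := by gcongr
    _ = ((t : ℝ) - j) ^ j * ((t : ℝ) - j) ^ n := by
      rw [mul_assoc, ← exp_add, add_neg_cancel, exp_zero, mul_one, pow_add, mul_comm]
    _ ≤ t.descFactorial j * ((t - j : ℕ) : ℝ) ^ n := by
      push_cast [hj.le]
      gcongr

end Estimates

section Averaging

open Nat

theorem sum_Icc_two_sub_inv_div_factorial_le (K : ℕ) :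
    ∑ j ∈ Icc 2 K, (7 / 12 - 1 / j : ℝ) / j ! ≤ 1 / 8 := by
  have hnonneg : ∀ j : ℕ, 2 ≤ j → 0 ≤ (7 / 12 - 1 / j : ℝ) / j ! := fun j hj ↦ by
    have : 1 / (j : ℝ) ≤ 1 / 2 := by gcongr; exact_mod_cast hj
    exact div_nonneg (by linarith) (by positivity)
  rw [← sum_filter_add_sum_filter_not (Icc 2 K) (· < 4)]
  have hsmall : ∑ j ∈ Icc 2 K with j < 4, (7 / 12 - 1 / j : ℝ) / j !
      ≤ ∑ j ∈ ({2, 3} : Finset ℕ), (7 / 12 - 1 / j : ℝ) / j ! :=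
    sum_le_sum_of_subset_of_nonneg (fun j hj ↦ by
      simp only [mem_filter, mem_Icc, mem_insert, mem_singleton] at hj ⊢; omega)
      fun j hj _ ↦ hnonneg j (by simp only [mem_insert, mem_singleton] at hj; omega)
  have hlarge : ∑ j ∈ Icc 2 K with ¬j < 4, (7 / 12 - 1 / j : ℝ) / j !
      ≤ 7 / 12 * ∑ j ∈ range (K + 1) with 4 ≤ j, (1 / j ! : ℝ) := by
    rw [mul_sum]
    refine (sum_le_sum fun j _ ↦ ?_).trans_eq (sum_congr (by
      ext; simp only [mem_filter, mem_Icc, mem_range, not_lt]; omega) fun _ _ ↦ rfl)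
    rw [mul_one_div]
    gcongr
    exact sub_le_self _ (by positivity)
  have htail := Complex.sum_div_factorial_le (α := ℝ) 4 (K + 1) (by norm_num)
  norm_num [Nat.factorial] at hsmall htail
  simp only [one_div] at hlarge ⊢
  linarith

theorem seven_twelfths_mul_card_le_sum_inv {β : Type*} (s : Finset β) (k : β → ℕ) {K : ℕ}
    (hk : ∀ x ∈ s, k x ∈ Icc 1 K) {T : ℝ} (hT : 0 ≤ T)
    (h1 : 3 / 10 * T ≤ #{x ∈ s | k x = 1})
    (hj : ∀ j ∈ Icc 2 K, (#{x ∈ s | k x = j} : ℝ) ≤ T / j !) :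
    7 / 12 * #s ≤ ∑ x ∈ s, (1 / k x : ℝ) := by
  have hmaps : ∀ x ∈ s, k x ∈ insert 1 (Icc 2 K) := fun x hx ↦ by
    have := mem_Icc.1 (hk x hx)
    simp only [mem_insert, mem_Icc]
    omega
  have hfiber : ∑ x ∈ s, (7 / 12 - 1 / k x : ℝ)
      = ∑ j ∈ insert 1 (Icc 2 K), #{x ∈ s | k x = j} * (7 / 12 - 1 / j : ℝ) := by
    rw [← sum_fiberwise_of_maps_to hmaps]
    refine sum_congr rfl fun j _ ↦ ?_
    rw [sum_congr rfl fun x hx ↦ by rw [(mem_filter.1 hx).2], sum_const, nsmul_eq_mul]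
  have hrest : ∑ j ∈ Icc 2 K, #{x ∈ s | k x = j} * (7 / 12 - 1 / j : ℝ) ≤ T / 8 := by
    calc ∑ j ∈ Icc 2 K, #{x ∈ s | k x = j} * (7 / 12 - 1 / j : ℝ)
        ≤ ∑ j ∈ Icc 2 K, T / j ! * (7 / 12 - 1 / j : ℝ) := sum_le_sum fun j hjK ↦ by
          have : 1 / (j : ℝ) ≤ 1 / 2 := by gcongr; exact_mod_cast (mem_Icc.1 hjK).1
          gcongr
          · linarith
          · exact hj j hjK
      _ = T * ∑ j ∈ Icc 2 K, (7 / 12 - 1 / j : ℝ) / j ! := by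
          rw [mul_sum]; exact sum_congr rfl fun _ _ ↦ by ring
      _ ≤ T * (1 / 8) := by gcongr; exact sum_Icc_two_sub_inv_div_factorial_le K
      _ = T / 8 := by ring
  -- the fibre `k = 1` contributes `(1 - 7/12) · (3/10) T = T/8`, which pays for all the others
  rw [sum_insert (by simp)] at hfiber
  have hsplit :
      ∑ x ∈ s, (7 / 12 - 1 / k x : ℝ) = 7 / 12 * #s - ∑ x ∈ s, (1 / k x : ℝ) := by
    rw [sum_sub_distrib, sum_const, nsmul_eq_mul]; ring
  simp only [Nat.cast_one, div_one] at hfiber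
  linarith

end Averaging

section Parameters

open Real

variable {m : ℕ}

theorem one_le_MM : 1 ≤ MM m := Nat.one_le_two_pow

theorem log_MM : log (MM m) = m * log 2 := by
  simp [MM, Real.log_pow]

theorem MM_mul_log_MM_le_NN : (MM m : ℝ) * log (MM m) ≤ NN m := by
  rw [log_MM, ← mul_assoc]
  exact Nat.le_ceil _

theorem NN_le_MM_mul_log_MM_add_one : (NN m : ℝ) ≤ MM m * log (MM m) + 1 := by
  rw [log_MM, ← mul_assoc]
  exact (Nat.ceil_lt_add_one (by positivity)).le

theorem MM_le_NN (hm : 2 ≤ m) : MM m ≤ NN m := by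
  have hlog : (1 : ℝ) ≤ log (MM m) := by
    rw [log_MM]
    have : (2 : ℝ) ≤ m := by exact_mod_cast hm
    nlinarith [Real.log_two_gt_d9]
  exact_mod_cast (le_mul_of_one_le_right (by positivity) hlog).trans MM_mul_log_MM_le_NN

theorem MM_sub_one_mul_log_le_NN : ((MM m - 1 : ℕ) : ℝ) * log (MM m - 1 : ℕ) ≤ NN m := by
  refine le_trans ?_ MM_mul_log_MM_le_NN
  rcases Nat.eq_zero_or_pos (MM m - 1) with h | h
  · rw [h, Nat.cast_zero, zero_mul]
    exact mul_nonneg (Nat.cast_nonneg _) (by rw [log_MM]; positivity)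
  · have h' : (1 : ℝ) ≤ (MM m - 1 : ℕ) := by exact_mod_cast h
    have hle : ((MM m - 1 : ℕ) : ℝ) ≤ MM m := by exact_mod_cast Nat.sub_le _ _
    exact mul_le_mul hle (log_le_log (by linarith) hle) (log_nonneg h') (by linarith)

theorem add_mul_le_two_pow (hm : 11 ≤ m) : 120 * m + 163 ≤ 2 ^ m := by
  induction m, hm using Nat.le_induction with
  | base => norm_num
  | succ n _ ih => rw [pow_succ]; omega

theorem NN_add_two_div_le (hm : 11 ≤ m) :
    ((NN m : ℝ) + 2) / ((MM m - 1 : ℕ) - 2) ≤ log (MM m - 1 : ℕ) + 1 / 40 := by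
  have hpow : (120 * m + 163 : ℝ) ≤ MM m := by exact_mod_cast add_mul_le_two_pow hm
  have hL : log (MM m) ≤ m := by
    rw [log_MM]
    nlinarith [Real.log_two_lt_d9, (Nat.cast_nonneg m : (0 : ℝ) ≤ m)]
  have hL0 : 0 ≤ log (MM m) := by rw [log_MM]; positivity
  have hcast : ((MM m - 1 : ℕ) : ℝ) = MM m - 1 := by
    rw [Nat.cast_sub (by simp [MM, Nat.one_le_two_pow]), Nat.cast_one]
  rw [hcast]
  set M : ℝ := (MM m : ℝ)
  have hM : 0 < M - 3 := by linarith
  have hM1 : 0 < M - 1 := by linarith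
  have hlog : log M - 1 / (M - 1) ≤ log (M - 1) := by
    have h := log_le_sub_one_of_pos (div_pos (by linarith : (0 : ℝ) < M) hM1)
    rw [log_div (by linarith : (0 : ℝ) < M).ne' hM1.ne'] at h
    have : M / (M - 1) - 1 = 1 / (M - 1) := by field_simp; ring
    linarith
  have hfrac : (M - 3) * (1 / (M - 1)) ≤ 1 := by
    rw [mul_one_div, div_le_one (by linarith)]; linarith
  rw [sub_sub, show (1 : ℝ) + 2 = 3 by norm_num, div_le_iff₀ hM]
  calc (NN m : ℝ) + 2 ≤ M * log M + 3 := by linarith [NN_le_MM_mul_log_MM_add_one (m := m)]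
    _ ≤ (M - 3) * (log M - 1 / (M - 1)) + (M - 3) / 40 := by nlinarith
    _ ≤ (M - 3) * log (M - 1) + (M - 3) / 40 := by gcongr
    _ = (log (M - 1) + 1 / 40) * (M - 3) := by ring

theorem five_le_MM_sub_one (hm : 11 ≤ m) : 5 ≤ MM m - 1 := by
  have := add_mul_le_two_pow hm
  unfold MM
  omega

end Parameters

section MissingValues

open Nat Real

variable {m : ℕ}

theorem three_tenths_mul_pow_le_card_img_eq (hm : 11 ≤ m) (S : Finset (Fin (MM m)))
    (hS : #S = MM m - 1) :
    3 / 10 * ((MM m - 1 : ℕ) : ℝ) ^ NN m ≤ #{X : Str m | img X = S} := by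
  have ht := five_le_MM_sub_one hm
  set t := MM m - 1
  have hup : ∀ j ≤ t,
      (t.descFactorial j : ℝ) * ((t - j : ℕ) : ℝ) ^ NN m ≤ (t : ℝ) ^ NN m :=
    fun j hj ↦ descFactorial_mul_pow_sub_le (by omega) MM_sub_one_mul_log_le_NN hj
  have hup1 := hup 1 (by omega)
  have hup3 := hup 3 (by omega)
  have hlow := pow_mul_exp_le_descFactorial_mul_pow_sub (t := t) (n := NN m) (j := 2) (by omega)
    (ε := 1 / 40) (by exact_mod_cast NN_add_two_div_le hm)
  have hexp : (19 / 20 : ℝ) * t ^ NN m ≤ t ^ NN m * exp (-(2 * (1 / 40))) := by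
    rw [mul_comm]
    gcongr
    linarith [add_one_le_exp (-(2 * (1 / 40) : ℝ))]
  have hlow' := hexp.trans hlow
  have hbonf : ∑ j ∈ range 4, (-1 : ℝ) ^ j * t.choose j * ((t - j : ℕ) : ℝ) ^ NN m
      ≤ #{X : Str m | img X = S} := by
    have h := sum_alternating_le_card_image_eq (ι := Fin (NN m)) (J := 3) (by decide) S
    rw [hS, Fintype.card_fin] at h
    exact_mod_cast h
  -- four-term Bonferroni: `1 - 1 + (19/20)/2! - 1/3! ≥ 3/10`
  simp only [descFactorial_eq_factorial_mul_choose] at hup1 hup3 hlow'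
  simp only [sum_range_succ, range_one, sum_singleton, pow_zero, choose_zero_right, cast_one,
    mul_one, tsub_zero, one_mul, pow_one, choose_one_right, neg_mul, even_two, Even.neg_pow,
    one_pow] at hbonf
  norm_num [factorial] at hup1 hup3 hlow'
  linarith

theorem three_tenths_mul_le_card_compl_img_eq_one (hm : 11 ≤ m) :
    3 / 10 * (MM m * ((MM m - 1 : ℕ) : ℝ) ^ NN m) ≤ #{X : Str m | #(img X)ᶜ = 1} := by
  calc 3 / 10 * (MM m * ((MM m - 1 : ℕ) : ℝ) ^ NN m)
      = ∑ _y : Fin (MM m), 3 / 10 * ((MM m - 1 : ℕ) : ℝ) ^ NN m := by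
        rw [sum_const, Finset.card_univ, Fintype.card_fin, nsmul_eq_mul]; ring
    _ ≤ ∑ y : Fin (MM m), (#{X : Str m | img X = {y}ᶜ} : ℝ) := sum_le_sum fun y _ ↦
        three_tenths_mul_pow_le_card_img_eq hm _
          (by rw [card_compl, card_singleton, Fintype.card_fin])
    _ ≤ #{X : Str m | #(img X)ᶜ = 1} := by
        exact_mod_cast sum_card_image_eq_compl_singleton_le (ι := Fin (NN m)) (α := Fin (MM m))

theorem card_compl_img_eq_le (hm : 11 ≤ m) {j : ℕ} (hj : j ∈ Icc 1 (MM m)) :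
    (#{X : Str m | #(img X)ᶜ = j} : ℝ) ≤ MM m * ((MM m - 1 : ℕ) : ℝ) ^ NN m / j ! := by
  obtain ⟨hj1, hjM⟩ := mem_Icc.1 hj
  obtain ⟨i, rfl⟩ : ∃ i, j = i + 1 := ⟨j - 1, by omega⟩
  have hMt : MM m = (MM m - 1) + 1 := (Nat.sub_add_cancel one_le_MM).symm
  have ht := five_le_MM_sub_one hm
  set t := MM m - 1
  have hcount : (#{X : Str m | #(img X)ᶜ = i + 1} : ℝ)
      ≤ (MM m).choose (i + 1) * ((t - i : ℕ) : ℝ) ^ NN m := by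
    have h := card_compl_image_eq_le (ι := Fin (NN m)) (α := Fin (MM m)) (i + 1)
    rw [Fintype.card_fin, Fintype.card_fin, show MM m - (i + 1) = t - i by omega] at h
    exact_mod_cast h
  have hdesc : ((MM m).choose (i + 1) : ℝ) * (i + 1)! = MM m * t.descFactorial i := by
    rw [hMt]
    exact_mod_cast (mul_comm _ _).trans
      ((descFactorial_eq_factorial_mul_choose _ _).symm.trans (succ_descFactorial_succ t i))
  have hup := descFactorial_mul_pow_sub_le (t := t) (n := NN m) (by omega)
    MM_sub_one_mul_log_le_NN (j := i) (by omega)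
  rw [le_div_iff₀ (by positivity)]
  calc (#{X : Str m | #(img X)ᶜ = i + 1} : ℝ) * (i + 1)!
      ≤ (MM m).choose (i + 1) * ((t - i : ℕ) : ℝ) ^ NN m * (i + 1)! := by gcongr
    _ = MM m * (t.descFactorial i * ((t - i : ℕ) : ℝ) ^ NN m) := by
        rw [mul_right_comm, hdesc, mul_assoc]
    _ ≤ MM m * (t : ℝ) ^ NN m := by gcongr

end MissingValues

section AverageBlockSensitivity

variable {m : ℕ}

theorem exists_img_eq_univ (h : MM m ≤ NN m) : ∃ X : Str m, img X = univ := by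
  refine ⟨fun i ↦ ⟨i % MM m, Nat.mod_lt _ one_le_MM⟩, eq_univ_of_forall fun y ↦ ?_⟩
  exact mem_image.2 ⟨⟨y, y.2.trans_le h⟩, mem_univ _, Fin.ext (Nat.mod_eq_of_lt y.2)⟩

theorem exists_img_ne_univ (hM : 1 < MM m) : ∃ X : Str m, img X ≠ univ := by
  refine ⟨fun _ ↦ ⟨0, by omega⟩, fun h ↦ ?_⟩
  obtain ⟨i, -, hi⟩ := mem_image.1 (h ▸ mem_univ (⟨1, hM⟩ : Fin (MM m)))
  simp [Fin.ext_iff] at hi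

theorem le_avgBs {f : Str m → Bool} {b : Bool} {c : ℝ} (hne : ∃ X, f X = b)
    (h : c * #{X | f X = b} ≤ ∑ X ∈ univ.filter (fun X ↦ f X = b), (bs f X : ℝ)) :
    c ≤ avgBs m f b := by
  obtain ⟨X, hX⟩ := hne
  rw [avgBs, le_div_iff₀ (mod_cast card_pos.2 ⟨X, mem_filter.2 ⟨mem_univ _, hX⟩⟩)]
  exact h

theorem MM_le_avgBs_true (hm : 2 ≤ m) : (MM m : ℝ) ≤ avgBs m (fSurjB m) true := by
  have hM : 1 < MM m := Nat.one_lt_two_pow (by omega)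
  obtain ⟨X, hX⟩ := exists_img_eq_univ (MM_le_NN hm)
  refine le_avgBs ⟨X, fSurjB_eq_true_iff.2 hX⟩ ?_
  rw [mul_comm, ← nsmul_eq_mul]
  exact card_nsmul_le_sum _ _ _ fun X hX ↦
    mod_cast MM_le_bs_of_surjective hM (fSurjB_eq_true_iff.1 (mem_filter.1 hX).2)

theorem filter_fSurjB_false_card_compl_img_eq {j : ℕ} (hj : j ≠ 0) :
    ({X : Str m | fSurjB m X = false} : Finset (Str m)).filter (fun X ↦ #(img X)ᶜ = j)
      = ({X : Str m | #(img X)ᶜ = j} : Finset (Str m)) := by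
  rw [filter_filter]
  exact filter_congr fun X _ ↦
    ⟨fun h ↦ h.2, fun h ↦ ⟨fSurjB_eq_false_iff.2 (h ▸ hj), h⟩⟩

theorem seven_twelfths_mul_le_avgBs_false (hm : 11 ≤ m) :
    7 / 12 * ((NN m : ℝ) - MM m) ≤ avgBs m (fSurjB m) false := by
  set D := ({X : Str m | fSurjB m X = false} : Finset (Str m)) with hD
  have hinv := seven_twelfths_mul_card_le_sum_inv D (fun X ↦ #(img X)ᶜ) (K := MM m)
    (fun X hX ↦ mem_Icc.2 ⟨Nat.one_le_iff_ne_zero.2 (fSurjB_eq_false_iff.1 (mem_filter.1 hX).2),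
      (card_le_univ _).trans (Fintype.card_fin _).le⟩)
    (T := MM m * ((MM m - 1 : ℕ) : ℝ) ^ NN m) (by positivity)
    (by rw [hD, filter_fSurjB_false_card_compl_img_eq one_ne_zero]
        exact three_tenths_mul_le_card_compl_img_eq_one hm)
    fun j hj ↦ by
      rw [hD, filter_fSurjB_false_card_compl_img_eq (by have := (mem_Icc.1 hj).1; omega)]
      exact card_compl_img_eq_le hm (Icc_subset_Icc_left (by norm_num) hj)
  have hNM : 0 ≤ (NN m : ℝ) - MM m := sub_nonneg.2 (mod_cast MM_le_NN (by omega))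
  obtain ⟨X, hX⟩ := exists_img_ne_univ (m := m) (Nat.one_lt_two_pow (by omega))
  refine le_avgBs ⟨X, by simpa [fSurjB] using hX⟩ ?_
  calc 7 / 12 * ((NN m : ℝ) - MM m) * #D
      = ((NN m : ℝ) - MM m) * (7 / 12 * #D) := by ring
    _ ≤ ((NN m : ℝ) - MM m) * ∑ X ∈ D, (1 / #(img X)ᶜ : ℝ) := by gcongr
    _ = ∑ X ∈ D, ((NN m : ℝ) - MM m) / #(img X)ᶜ := by
        rw [mul_sum]; exact sum_congr rfl fun _ _ ↦ mul_one_div _ _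
    _ ≤ ∑ X ∈ D, (bs (fSurjB m) X : ℝ) := sum_le_sum fun X hX ↦
        sub_div_le_bs_of_not_surjective (by simpa [fSurjB] using (mem_filter.1 hX).2)

end AverageBlockSensitivity

/-- for every `ε > 0`, for all sufficiently large `m`:
`bs̄_1(f_Surj) ≥ M` and `bs̄_0(f_Surj) ≥ (1/(e−1) − ε)·(N − M)`. -/
theorem stmt15 : ∀ ε : ℝ, 0 < ε → ∃ m0 : ℕ, ∀ m : ℕ, m0 ≤ m →
    (MM m : ℝ) ≤ avgBs m (fSurjB m) true ∧
    (1 / (Real.exp 1 - 1) - ε) * ((NN m : ℝ) - (MM m : ℝ)) ≤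
      avgBs m (fSurjB m) false := by
  intro ε hε
  refine ⟨11, fun m hm ↦ ⟨MM_le_avgBs_true (by omega), ?_⟩⟩
  have he : 1 / (Real.exp 1 - 1) ≤ 7 / 12 := by
    rw [div_le_iff₀ (by linarith [Real.exp_one_gt_d9])]
    linarith [Real.exp_one_gt_d9]
  calc (1 / (Real.exp 1 - 1) - ε) * ((NN m : ℝ) - (MM m : ℝ))
      ≤ 7 / 12 * ((NN m : ℝ) - MM m) := by
        gcongr
        · exact sub_nonneg.2 (mod_cast MM_le_NN (by omega))
        · linarith
    _ ≤ avgBs m (fSurjB m) false := seven_twelfths_mul_le_avgBs_false hm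

end
end GLN
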